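/- In the model of Ferrari–Fraiman–Grisi with vertex potential φ_i(x) = h_0 if d_i(x)=0, 0 if d_i(x)=1, and h_1·C(d_i(x),2) if d_i(x) ≥ 2 (where 0 < h_0 < h_1, C(n,2) the binomial coefficient, d_i the degree of vertex i), and F_V(x) = ∑_{i∈V} φ_i(x): for any finite graph x on vertex set V and any pair {i,j}, F_V(x^1_{ij}) - F_V(x^0_{ij}) ≥ -2 h_0, and this bound is attained, so the optimal constant M in the model equals -2 h_0. -/
import Mathlib


open Finset

variable {V : Type*} [Fintype V] [DecidableEq V]

/-- Degree of vertex `i` in the graph `x`. -/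
def deg (x : V → V → Bool) (i : V) : ℕ :=
  (Finset.univ.filter fun j => j ≠ i ∧ x i j = true).card

/-- The FFG vertex potential: h₀ if degree 0, 0 if degree 1, h₁·C(d,2) if d ≥ 2. -/
noncomputable def phiFFG (h₀ h₁ : ℝ) (d : ℕ) : ℝ :=
  if d = 0 then h₀ else if d = 1 then 0 else h₁ * (d.choose 2)

/-- F_V(x) = ∑_{i} φ_i(x). -/
noncomputable def FFFG (h₀ h₁ : ℝ) (x : V → V → Bool) : ℝ :=
  ∑ i, phiFFG h₀ h₁ (deg x i)

/-- The graph agreeing with `x` except that the edge {i,j} is set to `b`. -/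
def setEdge (x : V → V → Bool) (i j : V) (b : Bool) : V → V → Bool :=
  fun a a' => if (a = i ∧ a' = j) ∨ (a = j ∧ a' = i) then b else x a a'

lemma setEdge_comm (x : V → V → Bool) (i j : V) (b : Bool) :
    setEdge x j i b = setEdge x i j b := by
  funext a a'
  simp only [setEdge]
  exact if_congr (Iff.intro Or.symm Or.symm) rfl rfl

lemma deg_setEdge_ne (x : V → V → Bool) (i j : V) (b : Bool) (v : V)
    (hvi : v ≠ i) (hvj : v ≠ j) : deg (setEdge x i j b) v = deg x v := by
  unfold deg
  congr 1
  apply Finset.filter_congr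
  intro a _
  have h : ¬((v = i ∧ a = j) ∨ (v = j ∧ a = i)) := by tauto
  simp only [setEdge, if_neg h]

lemma deg_setEdge_true (x : V → V → Bool) {i j : V} (hij : i ≠ j) :
    deg (setEdge x i j true) i = deg (setEdge x i j false) i + 1 := by
  unfold deg
  have hset : (univ.filter fun a => a ≠ i ∧ setEdge x i j true i a = true)
      = insert j (univ.filter fun a => a ≠ i ∧ setEdge x i j false i a = true) := by
    ext a
    by_cases ha : a = j
    · subst ha
      simp [setEdge, hij.symm]
    · simp only [mem_insert, mem_filter, mem_univ, true_and]
      have hcond : ¬((i = i ∧ a = j) ∨ (i = j ∧ a = i)) := by tauto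
      have h1 : setEdge x i j true i a = x i a := if_neg hcond
      have h2 : setEdge x i j false i a = x i a := if_neg hcond
      rw [h1, h2]
      tauto
  rw [hset, Finset.card_insert_of_notMem]
  simp [setEdge]

lemma phi_succ_sub_ge (h₀ h₁ : ℝ) (h0pos : 0 < h₀) (h01 : h₀ < h₁) (d : ℕ) :
    phiFFG h₀ h₁ (d + 1) - phiFFG h₀ h₁ d ≥ -h₀ := by
  match d with
  | 0 => simp [phiFFG]
  | 1 =>
    simp only [phiFFG]
    norm_num
    linarith
  | (n+2) =>
    simp only [phiFFG]
    norm_num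
    have hch : (n + 3).choose 2 = (n + 2) + (n + 2).choose 2 := by
      have := Nat.choose_succ_succ (n + 2) 1
      simpa [Nat.choose_one_right] using this
    rw [hch]
    push_cast
    have hh1 : (0:ℝ) < h₁ := lt_trans h0pos h01
    nlinarith [Nat.cast_nonneg (α := ℝ) ((n+2).choose 2), Nat.cast_nonneg (α := ℝ) n]

lemma FFFG_diff_eq (h₀ h₁ : ℝ) (x : V → V → Bool) {i j : V} (hij : i ≠ j) :
    FFFG h₀ h₁ (setEdge x i j true) - FFFG h₀ h₁ (setEdge x i j false)
      = (phiFFG h₀ h₁ (deg (setEdge x i j false) i + 1)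
          - phiFFG h₀ h₁ (deg (setEdge x i j false) i))
      + (phiFFG h₀ h₁ (deg (setEdge x i j false) j + 1)
          - phiFFG h₀ h₁ (deg (setEdge x i j false) j)) := by
  have hdi : deg (setEdge x i j true) i = deg (setEdge x i j false) i + 1 :=
    deg_setEdge_true x hij
  have hdj : deg (setEdge x i j true) j = deg (setEdge x i j false) j + 1 := by
    rw [← setEdge_comm x i j true, ← setEdge_comm x i j false]
    exact deg_setEdge_true x hij.symm
  unfold FFFG
  rw [← Finset.sum_sub_distrib]
  have hsum : ∑ v, (phiFFG h₀ h₁ (deg (setEdge x i j true) v)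
        - phiFFG h₀ h₁ (deg (setEdge x i j false) v))
      = ∑ v ∈ ({i, j} : Finset V), (phiFFG h₀ h₁ (deg (setEdge x i j true) v)
        - phiFFG h₀ h₁ (deg (setEdge x i j false) v)) := by
    refine (Finset.sum_subset (Finset.subset_univ _) ?_).symm
    intro v _ hv
    simp only [mem_insert, mem_singleton] at hv
    push_neg at hv
    rw [deg_setEdge_ne x i j true v hv.1 hv.2, deg_setEdge_ne x i j false v hv.1 hv.2]
    ring
  rw [hsum, Finset.sum_pair hij, hdi, hdj]

lemma deg_setEdge_false_bot (i j v : V) :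
    deg (setEdge (fun _ _ => false) i j false) v = 0 := by
  simp [deg, setEdge]

/-- In the FFG model, F_V(x¹_{ij}) - F_V(x⁰_{ij}) ≥ -2h₀ for every simple graph x
and every pair {i,j}; moreover the bound is attained, so the optimal constant M
equals -2h₀. -/
theorem FFG_diff_ge_neg_two_h0 (h₀ h₁ : ℝ) (h0pos : 0 < h₀) (h01 : h₀ < h₁)
    (hcard : 2 ≤ Fintype.card V) :
    (∀ x : V → V → Bool, (∀ a b, x a b = x b a) → ∀ i j : V, i ≠ j →
        FFFG h₀ h₁ (setEdge x i j true) - FFFG h₀ h₁ (setEdge x i j false) ≥ -2 * h₀) ∧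
    (∃ (x : V → V → Bool), (∀ a b, x a b = x b a) ∧ ∃ i j : V, i ≠ j ∧
        FFFG h₀ h₁ (setEdge x i j true) - FFFG h₀ h₁ (setEdge x i j false) = -2 * h₀) := by
  constructor
  · intro x _ i j hij
    rw [FFFG_diff_eq h₀ h₁ x hij]
    have hi := phi_succ_sub_ge h₀ h₁ h0pos h01 (deg (setEdge x i j false) i)
    have hj := phi_succ_sub_ge h₀ h₁ h0pos h01 (deg (setEdge x i j false) j)
    linarith
  · obtain ⟨i, j, hij⟩ := Fintype.exists_pair_of_one_lt_card ((by omega : 1 < Fintype.card V))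
    refine ⟨fun _ _ => false, fun _ _ => rfl, i, j, hij, ?_⟩
    rw [FFFG_diff_eq h₀ h₁ _ hij, deg_setEdge_false_bot i j i, deg_setEdge_false_bot i j j]
    simp [phiFFG]
    ring
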